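/- arXiv:2501.02639 — 3 statements merged into one kernel-verified Lean document; each statement's English description precedes it below -/
import Mathlib

section
/- For ideals in C[t, z_{ij}]: if i ≤ j then J_i^t ⊆ J_j^t and K_j ⊆ K_i; and for i < j and k < ℓ, the inclusion J_i^t + K_j ⊆ J_k^t + K_ℓ holds if and only if i ≤ k and j ≥ ℓ. -/
open MvPolynomial

/-- The variable `t` in `ℂ[t, z_{ij} : 1 ≤ i, j ≤ n]`. -/
noncomputable def tt (n : ℕ) : MvPolynomial (Option (Fin n × Fin n)) ℂ := X none

/-- The variable `z_{ij}` in `ℂ[t, z_{ij} : 1 ≤ i, j ≤ n]` (`0`-based indexing). -/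
noncomputable def zz (n : ℕ) (i j : Fin n) : MvPolynomial (Option (Fin n × Fin n)) ℂ :=
  X (some (i, j))

/-- The first row index (row `1` in `1`-based indexing). -/
def row1 (n : ℕ) [NeZero n] : Fin n := ⟨0, Nat.pos_of_ne_zero (NeZero.ne n)⟩

/-- The last row index (row `n` in `1`-based indexing). -/
def rowN (n : ℕ) [NeZero n] : Fin n :=
  ⟨n - 1, Nat.sub_lt (Nat.pos_of_ne_zero (NeZero.ne n)) one_pos⟩

/-- The ideal `J_i^t = ⟨t z_{11} + z_{n1}, …, t z_{1i} + z_{ni}⟩` (so `J_0^t = 0`). -/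
noncomputable def Jt (n : ℕ) [NeZero n] (i : ℕ) :
    Ideal (MvPolynomial (Option (Fin n × Fin n)) ℂ) :=
  Ideal.span {f | ∃ k : Fin n, (k : ℕ) < i ∧ f = tt n * zz n (row1 n) k + zz n (rowN n) k}

/-- The ideal `K_j`, generated by the `j × j` minors `p_B` of `(z_{kℓ})` with row set
`B ⊆ {2, …, n}`, `|B| = j`, and columns `1, …, j`.  (For `j ≤ n` the column index
`b % n` is just `b`; for `j = n` no admissible `B` exists, so `K_n = 0`, and
`K_0 = ⟨det of the empty matrix⟩ = ⊤`, matching the conventions.) -/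
noncomputable def Kt (n : ℕ) [NeZero n] (j : ℕ) :
    Ideal (MvPolynomial (Option (Fin n × Fin n)) ℂ) :=
  Ideal.span {f | ∃ B : Fin j → Fin n, StrictMono B ∧ (∀ a, 1 ≤ (B a : ℕ)) ∧
    f = Matrix.det (Matrix.of fun a b : Fin j =>
      zz n (B a) ⟨(b : ℕ) % n, Nat.mod_lt _ (Nat.pos_of_ne_zero (NeZero.ne n))⟩)}


/-!
The inclusions are monotonicity: `J_i^t` grows with `i` by definition, and Laplace expansion
of a minor along its last column puts `K_{j+1}` inside `K_j`. Each failing inclusion is detected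
by a point of `ℂ^{1 + n²}` on which the larger side vanishes but one generator of the smaller side
does not. For `k < i` the generator `t z_{1,k+1} + z_{n,k+1}` of `J_i^t` is `1` at the point
whose only nonzero coordinate is `z_{n,k+1} = 1`. For `j < ℓ` the minor of `K_j` on rows
`2, …, j+1` is `1` at the point with `z_{c+1,c} = 1` for `c ≤ j` and all other coordinates `0`;
there the column `j+1 ≤ ℓ` of every minor of `K_ℓ` vanishes, and so does every generator of
`J_k^t` because `t = 0` and `z_{n,m} = 0` (this needs `j + 1 < n`).
-/

open Matrix

variable {n : ℕ} [NeZero n]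

noncomputable def jGen (n : ℕ) [NeZero n] (k : Fin n) :
    MvPolynomial (Option (Fin n × Fin n)) ℂ :=
  tt n * zz n (row1 n) k + zz n (rowN n) k

noncomputable def minorMatrix {j : ℕ} (B : Fin j → Fin n) :
    Matrix (Fin j) (Fin j) (MvPolynomial (Option (Fin n × Fin n)) ℂ) :=
  of fun a b => zz n (B a) ⟨(b : ℕ) % n, Nat.mod_lt _ (Nat.pos_of_ne_zero (NeZero.ne n))⟩

/-- The rows `2, …, j + 1`, in `0`-based indexing. -/
def succRows {j : ℕ} (hj : j < n) : Fin j → Fin n := fun a => ⟨a + 1, by omega⟩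

lemma jGen_mem_Jt {i : ℕ} {k : Fin n} (hk : (k : ℕ) < i) : jGen n k ∈ Jt n i :=
  Ideal.subset_span ⟨k, hk, rfl⟩

lemma det_minorMatrix_mem_Kt {j : ℕ} {B : Fin j → Fin n} (hB : StrictMono B)
    (hB1 : ∀ a, 1 ≤ (B a : ℕ)) : (minorMatrix B).det ∈ Kt n j :=
  Ideal.subset_span ⟨B, hB, hB1, rfl⟩

lemma det_minorMatrix_succRows_mem_Kt {j : ℕ} (hj : j < n) :
    (minorMatrix (succRows hj)).det ∈ Kt n j :=
  det_minorMatrix_mem_Kt (fun _ _ h => Nat.succ_lt_succ h) fun _ => Nat.le_add_left 1 _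

lemma Jt_mono (n : ℕ) [NeZero n] : Monotone (Jt n) := fun _ _ hij =>
  Ideal.span_le.2 fun _ ⟨_, hm, hf⟩ => hf ▸ jGen_mem_Jt (lt_of_lt_of_le hm hij)

lemma Kt_succ_le (m : ℕ) : Kt n (m + 1) ≤ Kt n m := by
  refine Ideal.span_le.2 ?_
  rintro f ⟨B, hB, hB1, rfl⟩
  rw [SetLike.mem_coe, det_succ_column _ (Fin.last m)]
  refine Ideal.sum_mem _ fun a _ => Ideal.mul_mem_left _ _ ?_
  convert det_minorMatrix_mem_Kt (hB.comp (Fin.strictMono_succAbove a)) fun _ => hB1 _ using 2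
  ext x y
  simp [minorMatrix]

lemma Kt_antitone (n : ℕ) [NeZero n] : Antitone (Kt n) :=
  antitone_nat_of_succ_le Kt_succ_le

section Evaluation

variable {A : Type*} [CommRing A] [Algebra ℂ A] {v : Option (Fin n × Fin n) → A}

lemma Jt_le_ker_aeval {k : ℕ}
    (hv : ∀ m : Fin n, (m : ℕ) < k →
      v none * v (some (row1 n, m)) + v (some (rowN n, m)) = 0) :
    Jt n k ≤ RingHom.ker (aeval v) := by
  refine Ideal.span_le.2 ?_
  rintro f ⟨m, hm, rfl⟩
  simpa [tt, zz] using hv m hm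

lemma Kt_le_ker_aeval {l : ℕ} (c : Fin n) (hc : (c : ℕ) < l)
    (hv : ∀ r : Fin n, (r : ℕ) ≠ 0 → v (some (r, c)) = 0) :
    Kt n l ≤ RingHom.ker (aeval v) := by
  refine Ideal.span_le.2 ?_
  rintro f ⟨B, -, hB1, rfl⟩
  rw [SetLike.mem_coe, RingHom.mem_ker, AlgHom.map_det]
  refine det_eq_zero_of_column_eq_zero ⟨c, hc⟩ fun a => ?_
  simpa [zz, Nat.mod_eq_of_lt c.isLt] using hv (B a) (by have := hB1 a; omega)

end Evaluation

lemma jGen_not_mem_Jt_add_Kt {k : Fin n} (hk : k ≠ 0) {l : ℕ} (hl : 0 < l) :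
    jGen n k ∉ Jt n k + Kt n l := by
  let v : Option (Fin n × Fin n) → ℂ := Pi.single (some (rowN n, k)) 1
  have hker : Jt n k + Kt n l ≤ RingHom.ker (aeval v) := by
    refine sup_le (Jt_le_ker_aeval fun m hm => ?_) (Kt_le_ker_aeval 0 hl fun r _ => ?_)
    · simp [v, Fin.ne_of_lt hm]
    · simp [v, hk.symm]
  intro hmem
  simpa [v, jGen, tt, zz] using hker hmem

lemma succRows_not_mem_Jt_add_Kt {j k l : ℕ} (hjl : j < l) (hln : l < n) :
    (minorMatrix (succRows (by omega : j < n))).det ∉ Jt n k + Kt n l := by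
  let v : Option (Fin n × Fin n) → ℂ :=
    fun o => o.elim 0 fun p => if (p.1 : ℕ) = (p.2 : ℕ) + 1 ∧ (p.2 : ℕ) < j then 1 else 0
  have hker : Jt n k + Kt n l ≤ RingHom.ker (aeval v) := by
    refine sup_le (Jt_le_ker_aeval fun m _ => ?_)
      (Kt_le_ker_aeval ⟨j, by omega⟩ hjl fun r _ => ?_)
    · simp only [v, Option.elim, rowN, zero_mul, zero_add]
      rw [if_neg]
      omega
    · simp [v]
  have hone : (aeval v).mapMatrix (minorMatrix (succRows (by omega : j < n))) = 1 := by
    ext a b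
    simp only [AlgHom.mapMatrix_apply, map_apply, minorMatrix, of_apply, zz, aeval_X, v,
      Option.elim, succRows, one_apply, Nat.mod_eq_of_lt (by omega : (b : ℕ) < n)]
    by_cases hab : a = b
    · simp [hab]
    · rw [if_neg hab, if_neg]
      rintro ⟨h, -⟩
      exact hab (Fin.ext (by omega))
  intro hmem
  have h0 := hker hmem
  rw [RingHom.mem_ker, AlgHom.map_det, hone, det_one] at h0
  exact one_ne_zero h0

lemma Jt_add_Kt_le_iff {i j k l : ℕ} (hk : 1 ≤ k) (hkl : k < l) (hl : l < n) :
    Jt n i + Kt n j ≤ Jt n k + Kt n l ↔ i ≤ k ∧ l ≤ j := by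
  refine ⟨fun hsub => ⟨?_, ?_⟩, fun ⟨hik, hlj⟩ =>
    sup_le_sup (Jt_mono n hik) (Kt_antitone n hlj)⟩
  · by_contra! hki
    have hk0 : (⟨k, by omega⟩ : Fin n) ≠ 0 := Fin.ne_of_val_ne (by simp; omega)
    exact jGen_not_mem_Jt_add_Kt hk0 (by omega) (hsub (Ideal.mem_sup_left (jGen_mem_Jt hki)))
  · by_contra! hjl
    exact succRows_not_mem_Jt_add_Kt hjl hl
      (hsub (Ideal.mem_sup_right (det_minorMatrix_succRows_mem_Kt _)))

theorem Jt_Kt_inclusions_general (n : ℕ) [NeZero n] :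
    (∀ i j : ℕ, 1 ≤ i → i ≤ j → j ≤ n - 1 → Jt n i ≤ Jt n j ∧ Kt n j ≤ Kt n i) ∧
    (∀ i j k l : ℕ, 1 ≤ i → i < j → j ≤ n - 1 → 1 ≤ k → k < l → l ≤ n - 1 →
      (Jt n i + Kt n j ≤ Jt n k + Kt n l ↔ i ≤ k ∧ l ≤ j)) :=
  ⟨fun _ _ _ hij _ => ⟨Jt_mono n hij, Kt_antitone n hij⟩,
    fun _ _ _ _ _ _ _ hk hkl hl => Jt_add_Kt_le_iff hk hkl (by omega)⟩

/-- Inclusions among the ideals `J_i^t` and `K_j` of `ℂ[t, z_{ij}]`: if `i ≤ j`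
then `J_i^t ⊆ J_j^t` and `K_j ⊆ K_i`; and for `i < j`, `k < ℓ` (all in `[n-1]`),
`J_i^t + K_j ⊆ J_k^t + K_ℓ` if and only if `i ≤ k` and `j ≥ ℓ`. -/
theorem Jt_Kt_inclusions (n : ℕ) [NeZero n] (hn : 2 ≤ n) :
    (∀ i j : ℕ, 1 ≤ i → i ≤ j → j ≤ n - 1 → Jt n i ≤ Jt n j ∧ Kt n j ≤ Kt n i) ∧
    (∀ i j k l : ℕ, 1 ≤ i → i < j → j ≤ n - 1 → 1 ≤ k → k < l → l ≤ n - 1 →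
      (Jt n i + Kt n j ≤ Jt n k + Kt n l ↔ i ≤ k ∧ l ≤ j)) :=
  Jt_Kt_inclusions_general n
end

section
/- Let n ≥ 2 and 1 ≤ m < i₀ ≤ n−1. Let B₀ ⊆ {2,...,n} with n ∈ B₀ and |B₀| = i₀. Then p_{B₀} ∉ ⟨z_{n1}, z_{n2}, ..., z_{nm}⟩ in C[z_{ij}]. -/
open MvPolynomial

/-- The variable `z_{ij}` in `ℂ[z_{ij} : 1 ≤ i, j ≤ n]` (`0`-based indexing). -/
noncomputable def z0 (n : ℕ) (i j : Fin n) : MvPolynomial (Fin n × Fin n) ℂ := X (i, j)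

/-- The ideal `J_i^0 = ⟨z_{n1}, …, z_{ni}⟩`. -/
noncomputable def J0 (n : ℕ) [NeZero n] (i : ℕ) : Ideal (MvPolynomial (Fin n × Fin n) ℂ) :=
  Ideal.span {f | ∃ k : Fin n, (k : ℕ) < i ∧ f = z0 n (rowN n) k}

/-- The ideal `K_j`, generated by the `j × j` minors `p_B` of `(z_{kℓ})` with row set
`B ⊆ {2, …, n}`, `|B| = j`, and columns `1, …, j` (for `j ≤ n` the column index
`b % n` is just `b`; `K_n = 0` since no admissible `B` exists). -/
noncomputable def K0 (n : ℕ) [NeZero n] (j : ℕ) : Ideal (MvPolynomial (Fin n × Fin n) ℂ) :=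
  Ideal.span {f | ∃ B : Fin j → Fin n, StrictMono B ∧ (∀ a, 1 ≤ (B a : ℕ)) ∧
    f = Matrix.det (Matrix.of fun a b : Fin j =>
      z0 n (B a) ⟨(b : ℕ) % n, Nat.mod_lt _ (Nat.pos_of_ne_zero (NeZero.ne n))⟩)}

/-!
Evaluate every variable at the point that is `1` on the positions `(B₀ a, a)` of the diagonal of
the minor and `0` elsewhere. The minor specialises to the determinant of the identity matrix,
so it is `1`. The generators `z_{nk}` with `k ≤ m` all vanish there: since `B₀` is increasing,
the row `n` can only be `B₀` of the last index `i₀ > m`. Hence the ideal lies in the kernel of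
the evaluation while the minor does not.
-/

namespace MvPolynomial

variable {R ι σ τ : Type*} [CommRing R] [Fintype ι] [DecidableEq ι]

theorem eval_indicator_det_of_X {B : ι → σ} {c : ι → τ}
    (hB : Function.Injective B) (hc : Function.Injective c) :
    eval ((Set.range fun a => (B a, c a)).indicator 1)
      (Matrix.of fun a b => (X (B a, c b) : MvPolynomial (σ × τ) R)).det = 1 := by
  classical
  have hdiag : (eval ((Set.range fun a => (B a, c a)).indicator 1)).mapMatrix
      (Matrix.of fun a b => (X (B a, c b) : MvPolynomial (σ × τ) R)) = 1 := by
    ext a b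
    have hmem : (B a, c b) ∈ Set.range (fun a => (B a, c a)) ↔ a = b := by
      constructor
      · rintro ⟨a', ha'⟩
        obtain ⟨hBa, hcb⟩ := Prod.mk.inj ha'
        exact (hB hBa).symm.trans (hc hcb)
      · rintro rfl
        exact ⟨a, rfl⟩
    simp only [RingHom.mapMatrix_apply, Matrix.map_apply, Matrix.of_apply, eval_X,
      Set.indicator_apply, hmem, Pi.one_apply, Matrix.one_apply]
  rw [RingHom.map_det, hdiag, Matrix.det_one]

theorem det_of_X_notMem_span_X [Nontrivial R] {B : ι → σ} {c : ι → τ}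
    (hB : Function.Injective B) (hc : Function.Injective c) {S : Set (σ × τ)}
    (hS : Disjoint S (Set.range fun a => (B a, c a))) :
    (Matrix.of fun a b => (X (B a, c b) : MvPolynomial (σ × τ) R)).det ∉
      Ideal.span (X '' S) := by
  intro hmem
  have hker : Ideal.span (X '' S) ≤ RingHom.ker
      (eval ((Set.range fun a => (B a, c a)).indicator 1) : MvPolynomial (σ × τ) R →+* R) := by
    rw [Ideal.span_le]
    rintro _ ⟨q, hq, rfl⟩
    simp [Set.indicator_of_notMem (hS.notMem_of_mem_left hq)]
  exact one_ne_zero ((eval_indicator_det_of_X hB hc).symm.trans (hker hmem))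

end MvPolynomial

theorem StrictMono.val_eq_of_apply_eq_last {k n : ℕ} {f : Fin k → Fin n} (hf : StrictMono f)
    {a : Fin k} (ha : (f a : ℕ) = n - 1) : (a : ℕ) = k - 1 := by
  by_contra hne
  have hlt : a < ⟨k - 1, by omega⟩ := Fin.lt_def.mpr (show (a : ℕ) < k - 1 by omega)
  have hfa : (f a : ℕ) < f ⟨k - 1, by omega⟩ := hf hlt
  have hflast := (f ⟨k - 1, by omega⟩).isLt
  omega

/-- For `1 ≤ m < i₀ ≤ n − 1` and `B₀ ⊆ {2, …, n}` with `n ∈ B₀` and `|B₀| = i₀`,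
the minor `p_{B₀}` does not lie in the ideal `⟨z_{n1}, …, z_{nm}⟩`. -/
theorem pB0_not_mem (n : ℕ) [NeZero n] (m i₀ : ℕ)
    (hmi : m < i₀) (hi : i₀ ≤ n - 1)
    (B₀ : Fin i₀ → Fin n) (hB : StrictMono B₀) :
    (Matrix.det (Matrix.of fun a b : Fin i₀ =>
        z0 n (B₀ a) (Fin.castLE (by omega) b))) ∉ J0 n m := by
  set S : Set (Fin n × Fin n) := {q | q.1 = rowN n ∧ (q.2 : ℕ) < m}
  have hJ : J0 n m ≤ Ideal.span (X '' S) := by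
    refine Ideal.span_mono ?_
    rintro _ ⟨k, hk, rfl⟩
    exact ⟨(rowN n, k), ⟨rfl, hk⟩, rfl⟩
  have hS : Disjoint S (Set.range fun a => (B₀ a, Fin.castLE (by omega) a)) := by
    rw [Set.disjoint_right]
    rintro _ ⟨a, rfl⟩ ⟨hrow, hcol⟩
    have ha_last := hB.val_eq_of_apply_eq_last (congrArg Fin.val hrow)
    simp only [Fin.val_castLE] at hcol
    omega
  exact fun hmem => det_of_X_notMem_span_X hB.injective (Fin.castLE_injective _) hS (hJ hmem)
end

section
/- For the lexicographic monomial order on C[s, t, z_{ij}] with s ≻ t ≻ z_{1n} ≻ z_{1,n−1} ≻ ... ≻ z_{11} ≻ z_{21} ≻ ... ≻ z_{nn}, the leading term of the minor p_B, for B = {b₁ < ... < b_j} ⊆ {2,...,n}, is the diagonal monomial z_{b₁1} z_{b₂2} ··· z_{b_j j}. -/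
open MvPolynomial

/-- Variables of `ℂ[s, t, z_{ij}]`: `none` is `s`, `some none` is `t`, and
`some (some (i, j))` is `z_{i+1, j+1}` (`0`-based indexing of `i, j`). -/
abbrev Vst (n : ℕ) := Option (Option (Fin n × Fin n))

/-- The precedence rank of each variable for the lexicographic order
`s ≻ t ≻ z_{1n} ≻ z_{1,n−1} ≻ ⋯ ≻ z_{11} ≻ z_{21} ≻ ⋯ ≻ z_{2n} ≻ ⋯ ≻ z_{nn}`
(smaller rank = higher precedence). -/
def rho (n : ℕ) : Vst n → ℕ
  | none => 0
  | some none => 1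
  | some (some (i, j)) =>
      if (i : ℕ) = 0 then 2 + (n - 1 - (j : ℕ)) else 2 + n + ((i : ℕ) - 1) * n + (j : ℕ)

/-- `m` is lexicographically smaller than `m'`: at the highest-precedence
variable where they differ, `m` has the smaller exponent. -/
def LexLT (n : ℕ) (m m' : Vst n →₀ ℕ) : Prop :=
  ∃ v : Vst n, (∀ w : Vst n, rho n w < rho n v → m w = m' w) ∧ m v < m' v

/-!
The minor is `∑_σ sign σ · ∏_i z_{b_{σ i}, i}`, and distinct permutations give distinct
monomials, so the diagonal monomial has coefficient `1`. Away from row `1` the variable order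
is row-major, i.e. lexicographic in (row, column). If `σ ≠ 1` has smallest moved point `a`,
every variable `z_{b_{σ i}, i}` with `i ≥ a` comes at or after `z_{b_a, a}` in this order, so
the monomials of `σ` and of the identity agree before `z_{b_a, a}`, which divides the diagonal
monomial but not that of `σ`.
-/

theorem Equiv.Perm.exists_min_ne_self {ι : Type*} [LinearOrder ι] [WellFoundedLT ι]
    {σ : Equiv.Perm ι} (hσ : σ ≠ 1) : ∃ a, σ a ≠ a ∧ ∀ i < a, σ i = i := by
  have hmoved : {i | σ i ≠ i}.Nonempty := by
    by_contra h
    exact hσ (Equiv.ext fun i => by_contra fun hi => h ⟨i, hi⟩)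
  obtain ⟨a, ha, hmin⟩ := wellFounded_lt.has_min _ hmoved
  exact ⟨a, ha, fun i hi => by_contra fun h => hmin i h hi⟩

theorem Equiv.Perm.toLex_le_toLex_apply {ι : Type*} [LinearOrder ι] {σ : Equiv.Perm ι}
    {a i : ι} (hσ : ∀ k < a, σ k = k) (hi : a ≤ i) : toLex (a, a) ≤ toLex (σ i, i) := by
  have ha : a ≤ σ i := by
    by_contra! h
    have : σ i = i := σ.injective (hσ _ h)
    exact (this ▸ h).not_ge hi
  rcases ha.lt_or_eq with h | h
  · exact Prod.Lex.toLex_le_toLex.2 (.inl h)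
  · exact Prod.Lex.toLex_le_toLex.2 (.inr ⟨h, hi⟩)

section PermMonomial

variable {ι τ : Type*} [Fintype ι] {v : ι × ι → τ}

noncomputable def permMonomial (v : ι × ι → τ) (σ : Equiv.Perm ι) : τ →₀ ℕ :=
  ∑ i, Finsupp.single (v (σ i, i)) 1

theorem permMonomial_apply (σ : Equiv.Perm ι) (w : τ) :
    permMonomial v σ w = ∑ i, Finsupp.single (v (σ i, i)) 1 w :=
  Finsupp.finsetSum_apply _ _ _

variable [DecidableEq ι]

theorem permMonomial_apply_apply (hv : Function.Injective v) (σ : Equiv.Perm ι) (a b : ι) :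
    permMonomial v σ (v (a, b)) = if σ b = a then 1 else 0 := by
  rw [permMonomial_apply, Finset.sum_eq_single b (fun i _ hi => Finsupp.single_eq_of_ne
    fun h => hi (Prod.ext_iff.1 (hv h)).2.symm) (by simp)]
  by_cases h : σ b = a
  · simp [h]
  · rw [if_neg h]
    exact Finsupp.single_eq_of_ne fun h' => h (Prod.ext_iff.1 (hv h')).1.symm

theorem permMonomial_injective (hv : Function.Injective v) :
    Function.Injective (permMonomial v) := by
  intro σ σ' h
  ext b
  have := congrArg (· (v (σ b, b))) h
  rw [permMonomial_apply_apply hv, permMonomial_apply_apply hv, if_pos rfl] at this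
  exact (ite_ne_right_iff.1 (this ▸ one_ne_zero)).1.symm

variable {R : Type*} [CommRing R]

theorem det_of_X (v : ι × ι → τ) :
    (Matrix.of fun a b => (X (v (a, b)) : MvPolynomial τ R)).det =
      ∑ σ : Equiv.Perm ι, monomial (permMonomial v σ) ((Equiv.Perm.sign σ : ℤ) : R) := by
  rw [Matrix.det_apply']
  refine Finset.sum_congr rfl fun σ _ => ?_
  rw [permMonomial, ← mul_one ((Equiv.Perm.sign σ : ℤ) : R), ← C_mul_monomial,
    monomial_sum_one, map_intCast]
  rfl

theorem coeff_permMonomial_det_of_X (hv : Function.Injective v) (σ : Equiv.Perm ι) :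
    coeff (permMonomial v σ) (Matrix.of fun a b => (X (v (a, b)) : MvPolynomial τ R)).det =
      ((Equiv.Perm.sign σ : ℤ) : R) := by
  classical
  rw [det_of_X, coeff_sum, Finset.sum_eq_single σ, coeff_monomial, if_pos rfl]
  · intro σ' _ h
    rw [coeff_monomial, if_neg fun h' => h (permMonomial_injective hv h')]
  · simp

theorem exists_permMonomial_eq_of_mem_support_det_of_X {m : τ →₀ ℕ}
    (hm : m ∈ (Matrix.of fun a b => (X (v (a, b)) : MvPolynomial τ R)).det.support) :
    ∃ σ, permMonomial v σ = m := by
  classical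
  rw [det_of_X] at hm
  obtain ⟨σ, -, hσ⟩ := Finset.mem_biUnion.1 (support_sum hm)
  exact ⟨σ, (Finset.mem_singleton.1 (support_monomial_subset hσ)).symm⟩

theorem exists_permMonomial_lt_permMonomial_one [LinearOrder ι] {β : Type*} [Preorder β]
    {r : τ → β} (hv : Function.Injective v) (hr : Monotone (r ∘ v ∘ ofLex))
    {σ : Equiv.Perm ι} (hσ : σ ≠ 1) :
    ∃ w, (∀ w', r w' < r w → permMonomial v σ w' = permMonomial v 1 w') ∧
      permMonomial v σ w < permMonomial v 1 w := by
  obtain ⟨a, ha, hfix⟩ := σ.exists_min_ne_self hσ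
  have hlate : ∀ σ' : Equiv.Perm ι, (∀ k < a, σ' k = k) → ∀ i, a ≤ i →
      r (v (a, a)) ≤ r (v (σ' i, i)) :=
    fun σ' hσ' i hi => hr (Equiv.Perm.toLex_le_toLex_apply hσ' hi)
  refine ⟨v (a, a), fun w hw => ?_, ?_⟩
  · rw [permMonomial_apply, permMonomial_apply]
    refine Finset.sum_congr rfl fun i _ => ?_
    rcases lt_or_ge i a with hi | hi
    · rw [hfix i hi, Equiv.Perm.one_apply]
    · have hne : ∀ σ' : Equiv.Perm ι, (∀ k < a, σ' k = k) → w ≠ v (σ' i, i) :=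
        fun σ' hσ' h => (h ▸ hw).not_ge (hlate σ' hσ' i hi)
      rw [Finsupp.single_eq_of_ne (hne σ hfix), Finsupp.single_eq_of_ne (hne 1 fun _ _ => rfl)]
  · simp [permMonomial_apply_apply hv, ha]

end PermMonomial

section Minor

variable {n j : ℕ}

def minorVar (hj : j ≤ n) (B : Fin j → Fin n) (p : Fin j × Fin j) : Vst n :=
  some (some (B p.1, Fin.castLE hj p.2))

theorem minorVar_injective (hj : j ≤ n) {B : Fin j → Fin n} (hB : Function.Injective B) :
    Function.Injective (minorVar hj B) := by
  rintro ⟨a, b⟩ ⟨c, d⟩ h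
  simp only [minorVar, Option.some.injEq, Prod.mk.injEq] at h
  exact Prod.ext (hB h.1) (Fin.castLE_injective hj h.2)

theorem rho_minorVar (hj : j ≤ n) {B : Fin j → Fin n} (hB1 : ∀ a, 1 ≤ (B a : ℕ))
    (p : Fin j × Fin j) : rho n (minorVar hj B p) = 2 + n + ((B p.1 : ℕ) - 1) * n + p.2 := by
  simp [rho, minorVar, Nat.one_le_iff_ne_zero.1 (hB1 p.1)]

theorem monotone_rho_minorVar (hj : j ≤ n) {B : Fin j → Fin n} (hB : StrictMono B)
    (hB1 : ∀ a, 1 ≤ (B a : ℕ)) : Monotone (rho n ∘ minorVar hj B ∘ ofLex) := by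
  intro p q h
  simp only [Function.comp_apply, rho_minorVar hj hB1]
  rcases Prod.Lex.le_iff.1 h with hrow | ⟨hrow, hcol⟩
  · have hBlt : (B (ofLex p).1 : ℕ) < B (ofLex q).1 := hB hrow
    have hmul : ((B (ofLex p).1 : ℕ) - 1 + 1) * n ≤ ((B (ofLex q).1 : ℕ) - 1) * n :=
      Nat.mul_le_mul_right n (by have := hB1 (ofLex p).1; omega)
    have hcol : ((ofLex p).2 : ℕ) < n := (ofLex p).2.isLt.trans_le hj
    rw [Nat.add_mul, one_mul] at hmul
    omega
  · rw [hrow]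
    exact Nat.add_le_add_left hcol _

end Minor

theorem pB_leadingTerm_diagonal_general (n j : ℕ) (hj : j ≤ n)
    (B : Fin j → Fin n) (hB : StrictMono B) (hB1 : ∀ a, 1 ≤ (B a : ℕ)) :
    let pB : MvPolynomial (Vst n) ℂ :=
      Matrix.det (Matrix.of fun a b : Fin j => X (some (some (B a, Fin.castLE hj b))))
    let D : Vst n →₀ ℕ :=
      ∑ a : Fin j, Finsupp.single (some (some (B a, Fin.castLE hj a))) 1
    MvPolynomial.coeff D pB = 1 ∧ ∀ m ∈ pB.support, m ≠ D → LexLT n m D := by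
  intro pB D
  have hv := minorVar_injective hj hB.injective
  have hpB : pB =
      (Matrix.of fun a b => (X (minorVar hj B (a, b)) : MvPolynomial (Vst n) ℂ)).det := rfl
  have hD : D = permMonomial (minorVar hj B) 1 := rfl
  refine ⟨by simp [hpB, hD, coeff_permMonomial_det_of_X hv], fun m hm hmD => ?_⟩
  obtain ⟨σ, rfl⟩ := exists_permMonomial_eq_of_mem_support_det_of_X (hpB ▸ hm)
  exact exists_permMonomial_lt_permMonomial_one hv (monotone_rho_minorVar hj hB hB1)
    (by rintro rfl; exact hmD hD.symm)

/-- For the lexicographic monomial order on `ℂ[s, t, z_{ij}]` with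
`s ≻ t ≻ z_{1n} ≻ ⋯ ≻ z_{11} ≻ z_{21} ≻ ⋯ ≻ z_{nn}`, the leading term of the
minor `p_B` (rows `B = {b₁ < … < b_j} ⊆ {2, …, n}`, columns `1, …, j`) is the
diagonal monomial `z_{b₁1} z_{b₂2} ⋯ z_{b_j j}`: its coefficient in `p_B` is `1`
and every other monomial of `p_B` is lexicographically smaller. -/
theorem pB_leadingTerm_diagonal (n j : ℕ) (hn : 2 ≤ n) (hj1 : 1 ≤ j) (hj : j ≤ n)
    (B : Fin j → Fin n) (hB : StrictMono B) (hB1 : ∀ a, 1 ≤ (B a : ℕ)) :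
    let pB : MvPolynomial (Vst n) ℂ :=
      Matrix.det (Matrix.of fun a b : Fin j => X (some (some (B a, Fin.castLE hj b))))
    let D : Vst n →₀ ℕ :=
      ∑ a : Fin j, Finsupp.single (some (some (B a, Fin.castLE hj a))) 1
    MvPolynomial.coeff D pB = 1 ∧ ∀ m ∈ pB.support, m ≠ D → LexLT n m D :=
  pB_leadingTerm_diagonal_general n j hj B hB hB1
end
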